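/- Let E(e) = C^h_{jlpq} e_{jl} e_{pq} where C^h is the homogenized tensor of a periodically connected stiff beam graph Γ₁ (defined as the minimum over admissible periodic correctors of the nonnegative cell energy). Then E(e) = 0 if and only if e is antisymmetric (e_{lj} = −e_{jl}); in particular, for antisymmetric e the minimum is attained by N_u ≡ N_v ≡ 0 and N_θ = e_{jl} n_j τ_l constant on Γ₁. -/

import Mathlib

/-!
By periodicity, on each beam the mean of `s + N_u'` is the stretch `s` and the mean of
`c + N_v' - N_θ` is `c - ⟨N_θ⟩`; Cauchy–Schwarz bounds the stretching and shear energies below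
by `s²` and `(c - ⟨N_θ⟩)²`, and a Poincaré inequality bounds `(⟨N_θ⟩ - N_θ(0))²` by the bending
energy. Both beams carry the same junction rotation `N_θ(0)`, so their shears `e₁₀` and `-e₀₁`
can only be compensated together when they are equal:
`E(e) ≥ γ (e₀₀² + e₁₁²) + min(η, κ)/4 · (e₁₀ + e₀₁)²`. Conversely, for antisymmetric `e` the
rigid rotation of the cell through `e₁₀` has zero energy.
-/

/-- A kinematically admissible periodic corrector on the unit cell graph of the
square lattice (stiff cross `Γ₁` of a horizontal and a vertical segment). -/
structure CrossCorrector where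
  uh : ℝ → ℝ
  vh : ℝ → ℝ
  th : ℝ → ℝ
  uv : ℝ → ℝ
  vv : ℝ → ℝ
  tv : ℝ → ℝ
  smooth_uh : ContDiff ℝ 1 uh
  smooth_vh : ContDiff ℝ 1 vh
  smooth_th : ContDiff ℝ 1 th
  smooth_uv : ContDiff ℝ 1 uv
  smooth_vv : ContDiff ℝ 1 vv
  smooth_tv : ContDiff ℝ 1 tv
  per_uh : uh (-(1/2)) = uh (1/2)
  per_vh : vh (-(1/2)) = vh (1/2)
  per_th : th (-(1/2)) = th (1/2)
  per_uv : uv (-(1/2)) = uv (1/2)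
  per_vv : vv (-(1/2)) = vv (1/2)
  per_tv : tv (-(1/2)) = tv (1/2)
  junc_disp1 : uh 0 = -(vv 0)
  junc_disp2 : vh 0 = uv 0
  junc_rot : th 0 = tv 0

/-- The cell energy of a corrector `N` for a macroscopic displacement
gradient `e`. -/
noncomputable def crossEnergy (γ η κ : ℝ) (e : Matrix (Fin 2) (Fin 2) ℝ)
    (N : CrossCorrector) : ℝ :=
  (∫ y in (-(1/2) : ℝ)..(1/2),
      (γ * (e 0 0 + deriv N.uh y) ^ 2 + η * (deriv N.th y) ^ 2
        + κ * (e 1 0 + deriv N.vh y - N.th y) ^ 2)) +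
  ∫ y in (-(1/2) : ℝ)..(1/2),
      (γ * (e 1 1 + deriv N.uv y) ^ 2 + η * (deriv N.tv y) ^ 2
        + κ * (-(e 0 1) + deriv N.vv y - N.tv y) ^ 2)

/-- The homogenized energy `E(e)`: the infimum of the cell energy over
admissible periodic correctors. -/
noncomputable def homEnergy (γ η κ : ℝ) (e : Matrix (Fin 2) (Fin 2) ℝ) : ℝ :=
  sInf {r : ℝ | ∃ N : CrossCorrector, r = crossEnergy γ η κ e N}

open intervalIntegral Set

lemma sq_intervalIntegral_le {f : ℝ → ℝ} (hf : Continuous f) {a b : ℝ} (hab : a ≤ b) :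
    (∫ x in a..b, f x) ^ 2 ≤ (b - a) * ∫ x in a..b, f x ^ 2 := by
  rcases hab.eq_or_lt with rfl | hlt
  · simp
  set m := (∫ x in a..b, f x) / (b - a)
  have hm : (b - a) * m = ∫ x in a..b, f x := mul_div_cancel₀ _ (sub_pos.2 hlt).ne'
  -- expand `0 ≤ ∫ (f - m)²`, where `m` is the mean of `f`
  have hvar : ∫ x in a..b, (f x - m) ^ 2
      = (∫ x in a..b, f x ^ 2) - 2 * m * (∫ x in a..b, f x) + (b - a) * m ^ 2 := by
    have hf1 : IntervalIntegrable f MeasureTheory.volume a b := hf.intervalIntegrable a b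
    have hf2 : IntervalIntegrable (fun x => f x ^ 2) MeasureTheory.volume a b :=
      (hf.pow 2).intervalIntegrable a b
    have hexp : ∀ x, (f x - m) ^ 2 = f x ^ 2 - 2 * m * f x + m ^ 2 := fun x => by ring
    simp_rw [hexp]
    rw [integral_add (hf2.sub (hf1.const_mul _)) intervalIntegrable_const,
      integral_sub hf2 (hf1.const_mul _), integral_const_mul, integral_const, smul_eq_mul]
  have hnonneg : 0 ≤ ∫ x in a..b, (f x - m) ^ 2 := integral_nonneg hab fun _ _ => sq_nonneg _
  rw [hvar, ← hm] at hnonneg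
  rw [← hm]
  nlinarith [sub_pos.2 hlt]

lemma sq_sub_le_mul_integral_sq_deriv {f : ℝ → ℝ} (hf : ContDiff ℝ 1 f) {a b x y : ℝ}
    (hx : x ∈ Icc a b) (hy : y ∈ Icc a b) :
    (f y - f x) ^ 2 ≤ (b - a) * ∫ t in a..b, deriv f t ^ 2 := by
  wlog hxy : x ≤ y generalizing x y
  · rw [← neg_sub, neg_sq]
    exact this hy hx (le_of_not_ge hxy)
  have hf' : Continuous (deriv f) := hf.continuous_deriv le_rfl
  have hftc : ∫ t in x..y, deriv f t = f y - f x :=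
    integral_deriv_eq_sub (fun t _ => (hf.differentiable one_ne_zero).differentiableAt)
      (hf'.intervalIntegrable _ _)
  have hsub : ∫ t in x..y, deriv f t ^ 2 ≤ ∫ t in a..b, deriv f t ^ 2 :=
    integral_mono_interval hx.1 hxy hy.2 (Filter.Eventually.of_forall fun _ => sq_nonneg _)
      ((hf'.pow 2).intervalIntegrable _ _)
  have hnonneg : 0 ≤ ∫ t in x..y, deriv f t ^ 2 := integral_nonneg hxy fun _ _ => sq_nonneg _
  calc (f y - f x) ^ 2 ≤ (y - x) * ∫ t in x..y, deriv f t ^ 2 :=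
        hftc ▸ sq_intervalIntegral_le hf' hxy
    _ ≤ (b - a) * ∫ t in a..b, deriv f t ^ 2 :=
        mul_le_mul (by linarith [hx.1, hy.2]) hsub hnonneg (by linarith [hx.1, hx.2])

lemma integral_deriv_eq_zero_of_eq {f : ℝ → ℝ} (hf : ContDiff ℝ 1 f) {a b : ℝ}
    (h : f a = f b) : ∫ x in a..b, deriv f x = 0 := by
  rw [integral_deriv_eq_sub (fun x _ => (hf.differentiable one_ne_zero).differentiableAt)
    ((hf.continuous_deriv le_rfl).intervalIntegrable _ _), h, sub_self]

lemma sq_sub_le_two_mul_shear_add_bending {v θ : ℝ → ℝ} (hv : ContDiff ℝ 1 v)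
    (hθ : ContDiff ℝ 1 θ) (hv_per : v (-(1/2)) = v (1/2)) (c : ℝ) :
    (c - θ 0) ^ 2 ≤ 2 * ((∫ y in (-(1/2) : ℝ)..(1/2), (c + deriv v y - θ y) ^ 2)
      + ∫ y in (-(1/2) : ℝ)..(1/2), deriv θ y ^ 2) := by
  have hv' := hv.continuous_deriv le_rfl
  have hθc := hθ.continuous
  set I := ∫ y in (-(1/2) : ℝ)..(1/2), θ y
  have hshear : (c - I) ^ 2 ≤ ∫ y in (-(1/2) : ℝ)..(1/2), (c + deriv v y - θ y) ^ 2 := by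
    have h := sq_intervalIntegral_le (f := fun y => c + deriv v y - θ y) (by fun_prop)
      (a := -(1/2)) (b := 1/2) (by norm_num)
    rwa [integral_sub (intervalIntegrable_const.add (hv'.intervalIntegrable _ _))
        (hθc.intervalIntegrable _ _), integral_add intervalIntegrable_const
        (hv'.intervalIntegrable _ _), integral_deriv_eq_zero_of_eq hv hv_per,
      integral_const, smul_eq_mul, add_zero, sub_neg_eq_add, add_halves, one_mul,
      one_mul] at h
  have hbending : (I - θ 0) ^ 2 ≤ ∫ y in (-(1/2) : ℝ)..(1/2), deriv θ y ^ 2 := by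
    have hmean : I - θ 0 = ∫ y in (-(1/2) : ℝ)..(1/2), (θ y - θ 0) := by
      rw [integral_sub (hθc.intervalIntegrable _ _) intervalIntegrable_const, integral_const,
        smul_eq_mul, sub_neg_eq_add, add_halves, one_mul]
    have hpointwise : ∀ y ∈ Icc (-(1/2) : ℝ) (1/2),
        (θ y - θ 0) ^ 2 ≤ ∫ t in (-(1/2) : ℝ)..(1/2), deriv θ t ^ 2 := fun y hy => by
      have h := sq_sub_le_mul_integral_sq_deriv hθ (x := 0) (by norm_num) hy
      rwa [sub_neg_eq_add, add_halves, one_mul] at h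
    calc (I - θ 0) ^ 2 ≤ ∫ y in (-(1/2) : ℝ)..(1/2), (θ y - θ 0) ^ 2 := by
          have h := sq_intervalIntegral_le (f := fun y => θ y - θ 0) (by fun_prop)
            (a := -(1/2)) (b := 1/2) (by norm_num)
          rwa [← hmean, sub_neg_eq_add, add_halves, one_mul] at h
      _ ≤ ∫ _ in (-(1/2) : ℝ)..(1/2), ∫ t in (-(1/2) : ℝ)..(1/2), deriv θ t ^ 2 :=
          integral_mono_on (by norm_num)
            (((hθc.sub continuous_const).pow 2).intervalIntegrable _ _) intervalIntegrable_const
            hpointwise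
      _ = ∫ t in (-(1/2) : ℝ)..(1/2), deriv θ t ^ 2 := by norm_num
  nlinarith [sq_nonneg (c - I - (I - θ 0))]

/-- The energy of one beam: `s = e_{jl}τ_jτ_l` and `c = e_{jl}n_jτ_l` are the stretch and shear
imposed by `e`, and `u`, `v`, `θ` are `N_u`, `N_v`, `N_θ` on the beam. -/
noncomputable def beamEnergy (γ η κ s c : ℝ) (u v θ : ℝ → ℝ) : ℝ :=
  ∫ y in (-(1/2) : ℝ)..(1/2),
    (γ * (s + deriv u y) ^ 2 + η * deriv θ y ^ 2 + κ * (c + deriv v y - θ y) ^ 2)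

lemma beamEnergy_ge {γ η κ : ℝ} (hγ : 0 ≤ γ) (hη : 0 ≤ η) (hκ : 0 ≤ κ) (s c : ℝ)
    {u v θ : ℝ → ℝ} (hu : ContDiff ℝ 1 u) (hv : ContDiff ℝ 1 v) (hθ : ContDiff ℝ 1 θ)
    (hu_per : u (-(1/2)) = u (1/2)) (hv_per : v (-(1/2)) = v (1/2)) :
    γ * s ^ 2 + min η κ / 2 * (c - θ 0) ^ 2 ≤ beamEnergy γ η κ s c u v θ := by
  have hu' := hu.continuous_deriv le_rfl
  have hv' := hv.continuous_deriv le_rfl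
  have hθ' := hθ.continuous_deriv le_rfl
  have hθc := hθ.continuous
  set A := ∫ y in (-(1/2) : ℝ)..(1/2), (s + deriv u y) ^ 2
  set B := ∫ y in (-(1/2) : ℝ)..(1/2), deriv θ y ^ 2
  set C := ∫ y in (-(1/2) : ℝ)..(1/2), (c + deriv v y - θ y) ^ 2
  have hsplit : beamEnergy γ η κ s c u v θ = γ * A + η * B + κ * C := by
    rw [beamEnergy, integral_add (Continuous.intervalIntegrable (by fun_prop) _ _)
        (Continuous.intervalIntegrable (by fun_prop) _ _),
      integral_add (Continuous.intervalIntegrable (by fun_prop) _ _)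
        (Continuous.intervalIntegrable (by fun_prop) _ _),
      integral_const_mul, integral_const_mul, integral_const_mul]
  have hstretch : s ^ 2 ≤ A := by
    have h := sq_intervalIntegral_le (f := fun y => s + deriv u y) (by fun_prop)
      (a := -(1/2)) (b := 1/2) (by norm_num)
    rwa [integral_add intervalIntegrable_const (hu'.intervalIntegrable _ _),
      integral_deriv_eq_zero_of_eq hu hu_per, integral_const, smul_eq_mul, add_zero,
      sub_neg_eq_add, add_halves, one_mul, one_mul] at h
  have hB : 0 ≤ B := integral_nonneg (by norm_num) fun _ _ => sq_nonneg _
  have hC : 0 ≤ C := integral_nonneg (by norm_num) fun _ _ => sq_nonneg _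
  have hshear := sq_sub_le_two_mul_shear_add_bending hv hθ hv_per c
  have hμ : 0 ≤ min η κ := le_min hη hκ
  rw [hsplit]
  nlinarith [mul_le_mul_of_nonneg_left hstretch hγ, mul_le_mul_of_nonneg_left hshear hμ,
    mul_le_mul_of_nonneg_right (min_le_left η κ) hB,
    mul_le_mul_of_nonneg_right (min_le_right η κ) hC]

lemma crossEnergy_eq_add_beamEnergy (γ η κ : ℝ) (e : Matrix (Fin 2) (Fin 2) ℝ)
    (N : CrossCorrector) :
    crossEnergy γ η κ e N = beamEnergy γ η κ (e 0 0) (e 1 0) N.uh N.vh N.th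
      + beamEnergy γ η κ (e 1 1) (-e 0 1) N.uv N.vv N.tv := rfl

lemma crossEnergy_ge {γ η κ : ℝ} (hγ : 0 ≤ γ) (hη : 0 ≤ η) (hκ : 0 ≤ κ)
    (e : Matrix (Fin 2) (Fin 2) ℝ) (N : CrossCorrector) :
    γ * e 0 0 ^ 2 + γ * e 1 1 ^ 2 + min η κ / 4 * (e 1 0 + e 0 1) ^ 2
      ≤ crossEnergy γ η κ e N := by
  have hhor := beamEnergy_ge hγ hη hκ (e 0 0) (e 1 0) N.smooth_uh N.smooth_vh N.smooth_th
    N.per_uh N.per_vh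
  have hver := beamEnergy_ge hγ hη hκ (e 1 1) (-e 0 1) N.smooth_uv N.smooth_vv N.smooth_tv
    N.per_uv N.per_vv
  rw [← N.junc_rot] at hver
  have hjunction : (e 1 0 + e 0 1) ^ 2 ≤ 2 * ((e 1 0 - N.th 0) ^ 2 + (-e 0 1 - N.th 0) ^ 2) := by
    nlinarith [sq_nonneg (e 1 0 - N.th 0 + (-e 0 1 - N.th 0))]
  rw [crossEnergy_eq_add_beamEnergy]
  nlinarith [mul_le_mul_of_nonneg_left hjunction (le_min hη hκ)]

noncomputable def rigidRotation (c : ℝ) : CrossCorrector where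
  uh := 0
  vh := 0
  th := fun _ => c
  uv := 0
  vv := 0
  tv := fun _ => c
  smooth_uh := contDiff_const
  smooth_vh := contDiff_const
  smooth_th := contDiff_const
  smooth_uv := contDiff_const
  smooth_vv := contDiff_const
  smooth_tv := contDiff_const
  per_uh := rfl
  per_vh := rfl
  per_th := rfl
  per_uv := rfl
  per_vv := rfl
  per_tv := rfl
  junc_disp1 := neg_zero.symm
  junc_disp2 := rfl
  junc_rot := rfl

lemma Matrix.transpose_eq_neg_iff_fin_two (e : Matrix (Fin 2) (Fin 2) ℝ) :
    e.transpose = -e ↔ e 0 0 = 0 ∧ e 1 1 = 0 ∧ e 1 0 + e 0 1 = 0 := by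
  rw [← Matrix.ext_iff]
  simp only [Fin.forall_fin_two, Matrix.transpose_apply, Matrix.neg_apply]
  constructor
  · rintro ⟨⟨h00, h01⟩, -, h11⟩
    exact ⟨by linarith, by linarith, by linarith⟩
  · rintro ⟨h00, h11, h10⟩
    exact ⟨⟨by linarith, by linarith⟩, by linarith, by linarith⟩

lemma crossEnergy_rigidRotation (γ η κ : ℝ) {e : Matrix (Fin 2) (Fin 2) ℝ}
    (he : e.transpose = -e) : crossEnergy γ η κ e (rigidRotation (e 1 0)) = 0 := by
  obtain ⟨h00, h11, h10⟩ := (Matrix.transpose_eq_neg_iff_fin_two e).1 he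
  have h01 : -e 0 1 = e 1 0 := by linarith
  simp [crossEnergy, rigidRotation, h00, h11, h01]

lemma le_homEnergy {γ η κ r : ℝ} {e : Matrix (Fin 2) (Fin 2) ℝ}
    (h : ∀ N, r ≤ crossEnergy γ η κ e N) : r ≤ homEnergy γ η κ e :=
  le_csInf ⟨_, rigidRotation 0, rfl⟩ (by rintro _ ⟨N, rfl⟩; exact h N)

lemma homEnergy_le {γ η κ r : ℝ} {e : Matrix (Fin 2) (Fin 2) ℝ}
    (h : ∀ N, r ≤ crossEnergy γ η κ e N) (N : CrossCorrector) :
    homEnergy γ η κ e ≤ crossEnergy γ η κ e N :=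
  csInf_le ⟨r, by rintro _ ⟨N, rfl⟩; exact h N⟩ ⟨N, rfl⟩

/-- `E(e) = 0` iff `e` is antisymmetric; and for antisymmetric `e` the minimum
is attained by `N_u ≡ N_v ≡ 0` and `N_θ = e_{jl}n_jτ_l` constant on `Γ₁`
(this common constant being `e 1 0` on both segments). -/
theorem stmt_18 (γ η κ : ℝ) (hγ : 0 < γ) (hη : 0 < η) (hκ : 0 < κ) :
    ∀ e : Matrix (Fin 2) (Fin 2) ℝ,
      (homEnergy γ η κ e = 0 ↔ e.transpose = -e) ∧
      (e.transpose = -e → ∃ N : CrossCorrector,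
        N.uh = 0 ∧ N.vh = 0 ∧ N.uv = 0 ∧ N.vv = 0 ∧
        N.th = (fun _ => e 1 0) ∧ N.tv = (fun _ => e 1 0) ∧
        crossEnergy γ η κ e N = 0) := by
  intro e
  have hbound := crossEnergy_ge hγ.le hη.le hκ.le e
  have hnonneg : ∀ N, 0 ≤ crossEnergy γ η κ e N := fun N => by
    refine le_trans ?_ (hbound N)
    positivity
  refine ⟨⟨fun h => ?_, fun he => ?_⟩, fun he => ⟨rigidRotation (e 1 0), rfl, rfl, rfl, rfl,
    rfl, rfl, crossEnergy_rigidRotation γ η κ he⟩⟩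
  · have hquad := (le_homEnergy hbound).trans_eq h
    have hμ : 0 < min η κ / 4 := by positivity
    have hsq : e 0 0 ^ 2 = 0 ∧ e 1 1 ^ 2 = 0 ∧ (e 1 0 + e 0 1) ^ 2 = 0 := by
      refine ⟨?_, ?_, ?_⟩ <;> nlinarith [sq_nonneg (e 0 0), sq_nonneg (e 1 1),
        sq_nonneg (e 1 0 + e 0 1)]
    simpa only [Matrix.transpose_eq_neg_iff_fin_two, pow_eq_zero_iff two_ne_zero] using hsq
  · exact le_antisymm ((homEnergy_le hnonneg _).trans_eq (crossEnergy_rigidRotation γ η κ he))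
      (le_homEnergy hnonneg)
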